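/- The 1/2-spin representation π^{1/2} of so(2n+1, ℂ) on Λℂⁿ is irreducible: any subspace of Λℂⁿ invariant under π^{1/2}(so(2n+1, ℂ)) is either {0} or all of Λℂⁿ. -/

import Mathlib

noncomputable section

open scoped ComplexConjugate

/-- The fermionic Fock space `Γ_∧ℂⁿ`, realized concretely via the orthonormal basis
`e_S = e_{j_1} ∧ ⋯ ∧ e_{j_k}` indexed by subsets `S ⊆ {1,…,n}`. -/
abbrev Fock (n : ℕ) : Type := EuclideanSpace ℂ (Finset (Fin n))

/-- Sign `(-1)^{#{i ∈ S : i < j}}` arising from wedging `e_j` into `e_S`. -/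
def csign {n : ℕ} (j : Fin n) (S : Finset (Fin n)) : ℂ :=
  (-1 : ℂ) ^ ((S.filter fun i => i < j).card)

/-- The creation operator `c†_j = (e_j ∧ ·)` on the fermionic Fock space. -/
def creat {n : ℕ} (j : Fin n) : Module.End ℂ (Fock n) where
  toFun ψ := WithLp.toLp 2 (fun S : Finset (Fin n) =>
    if j ∈ S then csign j (S.erase j) * ψ (S.erase j) else 0)
  map_add' := by
    intro ψ φ; ext S; by_cases h : j ∈ S <;> simp [h] <;> ring
  map_smul' := by
    intro a ψ; ext S; by_cases h : j ∈ S <;> simp [h] <;> ring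

/-- The annihilation operator `c_j`, defined as the Hilbert adjoint of `c†_j`. -/
def annih {n : ℕ} (j : Fin n) : Module.End ℂ (Fock n) :=
  LinearMap.adjoint (creat j)

/-- The creation operator `c†(v) = (v ∧ ·)` for a general vector `v ∈ ℂⁿ`:
since `v = Σ_j v_j e_j`, wedging by `v` is `Σ_j v_j (e_j ∧ ·)`. -/
def creatV {n : ℕ} (v : Fin n → ℂ) : Module.End ℂ (Fock n) := ∑ j, v j • creat j

/-- The annihilation operator `c(v)`, the Hilbert adjoint of `c†(v)`. -/
def annihV {n : ℕ} (v : Fin n → ℂ) : Module.End ℂ (Fock n) :=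
  LinearMap.adjoint (creatV v)

/-- `e_{2j-1}` (1-based), i.e. index `2j` (0-based), in `ℂ^{2n}`. -/
def idxA {n : ℕ} (j : Fin n) : Fin (2*n) := ⟨2*(j : ℕ), by have := j.isLt; omega⟩

/-- `e_{2j}` (1-based), i.e. index `2j+1` (0-based), in `ℂ^{2n}`. -/
def idxB {n : ℕ} (j : Fin n) : Fin (2*n) := ⟨2*(j : ℕ)+1, by have := j.isLt; omega⟩

/-- The projection `P₁ : ℂ^{2n} → ℂⁿ`, `e_{2j-1} ↦ e_j`, `e_{2j} ↦ 0`. -/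
def P1 {n : ℕ} (v : Fin (2*n) → ℂ) : Fin n → ℂ := fun j => v (idxA j)

/-- The projection `P₂ : ℂ^{2n} → ℂⁿ`, `e_{2j} ↦ e_j`, `e_{2j-1} ↦ 0`. -/
def P2 {n : ℕ} (v : Fin (2*n) → ℂ) : Fin n → ℂ := fun j => v (idxB j)

/-- The Fock representation `γ(v) = c†(P₁v) − c(conj(P₁v)) − i(c†(P₂v) + c(conj(P₂v)))`. -/
def gam {n : ℕ} (v : Fin (2*n) → ℂ) : Module.End ℂ (Fock n) :=
  creatV (P1 v) - annihV (fun j => conj (P1 v j))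
    - Complex.I • (creatV (P2 v) + annihV (fun j => conj (P2 v j)))

/-- `γ_j = γ(e_j)` for the standard basis of `ℂ^{2n}`. -/
def gamB {n : ℕ} (j : Fin (2*n)) : Module.End ℂ (Fock n) := gam (Pi.single j 1)

/-!
The Clifford generators are `γ_{2j-1} = c†_j - c_j` and `γ_{2j} = -i (c†_j + c_j)`, so a subspace
invariant under the `½ γ_ℓ` is invariant under every creation and annihilation operator. Then it is
invariant under `c†_j c_j` and `c_j c†_j`, which multiply a vector by the indicator of
`{S | j ∈ S}` and of `{S | j ∉ S}`; products of these isolate any single coordinate, so a nonzero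
invariant subspace contains a basis vector `e_S`. Annihilation operators lower `e_S` to the vacuum
`e_∅` (up to sign), and creation operators raise the vacuum to every `e_T`.
-/

def toggle {α : Type*} [DecidableEq α] (j : α) (S : Finset α) : Finset α :=
  if j ∈ S then S.erase j else insert j S

lemma toggle_involutive {α : Type*} [DecidableEq α] (j : α) :
    Function.Involutive (toggle j) := by
  intro S
  by_cases h : j ∈ S <;> simp [toggle, h, Finset.insert_erase]

def IndicatorStable {𝕜 κ : Type*} [RCLike 𝕜] (p : Submodule 𝕜 (EuclideanSpace 𝕜 κ)) (s : Set κ) :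
    Prop :=
  ∀ ψ ∈ p, WithLp.toLp 2 (s.indicator ψ) ∈ p

namespace IndicatorStable

variable {𝕜 κ : Type*} [RCLike 𝕜] {p : Submodule 𝕜 (EuclideanSpace 𝕜 κ)}

lemma univ : IndicatorStable p Set.univ := by
  simp [IndicatorStable]

lemma inter {s t : Set κ} (hs : IndicatorStable p s) (ht : IndicatorStable p t) :
    IndicatorStable p (s ∩ t) := by
  intro ψ hψ
  simpa [Set.indicator_indicator, Set.inter_comm] using hs _ (ht ψ hψ)

lemma iInter_finset {ι : Type*} {s : ι → Set κ} (hs : ∀ i, IndicatorStable p (s i))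
    (A : Finset ι) : IndicatorStable p (⋂ i ∈ A, s i) := by
  classical
  induction A using Finset.induction_on with
  | empty => simpa using univ
  | insert i A _ ih => simpa using (hs i).inter ih

lemma single_mem [DecidableEq κ] {S : κ} (hS : IndicatorStable p {S}) {ψ : EuclideanSpace 𝕜 κ}
    (hψ : ψ ∈ p) (hψS : ψ S ≠ 0) : EuclideanSpace.single S 1 ∈ p := by
  have h : WithLp.toLp 2 (({S} : Set κ).indicator ψ) = ψ S • EuclideanSpace.single S 1 := by
    ext T
    by_cases hT : T = S <;> simp [hT]
  have := p.smul_mem (ψ S)⁻¹ (hS ψ hψ)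
  rwa [h, smul_smul, inv_mul_cancel₀ hψS, one_smul] at this

end IndicatorStable

section FockOperators

variable {n : ℕ}

lemma csign_conj (j : Fin n) (S : Finset (Fin n)) : conj (csign j S) = csign j S := by
  simp [csign]

lemma csign_mul_self (j : Fin n) (S : Finset (Fin n)) : csign j S * csign j S = 1 := by
  rw [csign, ← pow_add, ← two_mul, pow_mul, neg_one_sq, one_pow]

lemma csign_ne_zero (j : Fin n) (S : Finset (Fin n)) : csign j S ≠ 0 := by
  simp [csign]

lemma creat_apply (j : Fin n) (ψ : Fock n) (S : Finset (Fin n)) :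
    creat j ψ S = if j ∈ S then csign j (S.erase j) * ψ (S.erase j) else 0 := rfl

lemma annih_apply (j : Fin n) (ψ : Fock n) (T : Finset (Fin n)) :
    annih j ψ T = if j ∈ T then 0 else csign j T * ψ (insert j T) := by
  let c : Module.End ℂ (Fock n) :=
    { toFun := fun ψ => WithLp.toLp 2 fun T => if j ∈ T then 0 else csign j T * ψ (insert j T)
      map_add' := by intro ψ φ; ext T; by_cases h : j ∈ T <;> simp [h, mul_add]
      map_smul' := by intro a ψ; ext T; by_cases h : j ∈ T <;> simp [h, mul_left_comm] }
  suffices c = annih j from congrArg (· ψ T) this.symm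
  refine (LinearMap.eq_adjoint_iff _ _).mpr fun x y => ?_
  simp only [PiLp.inner_apply, RCLike.inner_apply', c, LinearMap.coe_mk, AddHom.coe_mk,
    creat_apply]
  rw [← Equiv.sum_comp (toggle_involutive j).toPerm]
  refine Finset.sum_congr rfl fun T _ => ?_
  by_cases h : j ∈ T
  · simp [toggle, h, csign_conj]
    ring
  · simp [toggle, h]

lemma creat_annih_apply (j : Fin n) (ψ : Fock n) (T : Finset (Fin n)) :
    creat j (annih j ψ) T = {T | j ∈ T}.indicator ψ T := by
  rw [creat_apply, annih_apply]
  by_cases h : j ∈ T <;> simp [h, ← mul_assoc, csign_mul_self]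

lemma annih_creat_apply (j : Fin n) (ψ : Fock n) (T : Finset (Fin n)) :
    annih j (creat j ψ) T = {T | j ∉ T}.indicator ψ T := by
  rw [annih_apply, creat_apply]
  by_cases h : j ∈ T <;> simp [h, ← mul_assoc, csign_mul_self]

lemma P1_single_idxA (j : Fin n) (c : ℂ) : P1 (Pi.single (idxA j) c) = Pi.single j c := by
  funext k
  simp [P1, Pi.single_apply, idxA, Fin.ext_iff]

lemma P2_single_idxA (j : Fin n) (c : ℂ) : P2 (Pi.single (idxA j) c) = 0 := by
  funext k
  simp [P2, Pi.single_apply, idxA, idxB, Fin.ext_iff]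
  omega

lemma P1_single_idxB (j : Fin n) (c : ℂ) : P1 (Pi.single (idxB j) c) = 0 := by
  funext k
  simp [P1, Pi.single_apply, idxA, idxB, Fin.ext_iff]
  omega

lemma P2_single_idxB (j : Fin n) (c : ℂ) : P2 (Pi.single (idxB j) c) = Pi.single j c := by
  funext k
  simp [P2, Pi.single_apply, idxB, Fin.ext_iff]

lemma gamB_idxA (j : Fin n) : gamB (idxA j) = creat j - annih j := by
  simp [gamB, gam, P1_single_idxA, P2_single_idxA, creatV, annihV, annih, Pi.single_apply,
    apply_ite]

lemma gamB_idxB (j : Fin n) : gamB (idxB j) = -Complex.I • (creat j + annih j) := by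
  simp [gamB, gam, P1_single_idxB, P2_single_idxB, creatV, annihV, annih, Pi.single_apply,
    apply_ite]
  abel

lemma creat_eq_gamB (j : Fin n) (x : Fock n) :
    creat j x = ((1/2 : ℂ) • gamB (idxA j)) x + Complex.I • ((1/2 : ℂ) • gamB (idxB j)) x := by
  simp only [gamB_idxA, gamB_idxB, LinearMap.smul_apply, LinearMap.sub_apply, LinearMap.add_apply]
  match_scalars <;> ring_nf <;> simp only [Complex.I_sq] <;> norm_num

lemma annih_eq_gamB (j : Fin n) (x : Fock n) :
    annih j x = Complex.I • ((1/2 : ℂ) • gamB (idxB j)) x - ((1/2 : ℂ) • gamB (idxA j)) x := by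
  simp only [gamB_idxA, gamB_idxB, LinearMap.smul_apply, LinearMap.sub_apply, LinearMap.add_apply]
  match_scalars <;> ring_nf <;> simp only [Complex.I_sq] <;> norm_num

lemma creat_single {a : Fin n} {S : Finset (Fin n)} (ha : a ∉ S) :
    creat a (EuclideanSpace.single S 1) = csign a S • EuclideanSpace.single (insert a S) 1 := by
  ext T
  rw [creat_apply]
  by_cases haT : a ∈ T
  · by_cases hT : T = insert a S
    · simp [hT, ha]
    · have : T.erase a ≠ S := fun h => hT (by rw [← h, Finset.insert_erase haT])
      simp [haT, hT, this]
  · have : T ≠ insert a S := fun h => haT (h ▸ Finset.mem_insert_self a S)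
    simp [haT, this]

lemma annih_single {a : Fin n} {S : Finset (Fin n)} (ha : a ∉ S) :
    annih a (EuclideanSpace.single (insert a S) 1) = csign a S • EuclideanSpace.single S 1 := by
  ext T
  rw [annih_apply]
  by_cases haT : a ∈ T
  · have : T ≠ S := fun h => ha (h ▸ haT)
    simp [haT, this]
  · by_cases hT : T = S
    · simp [hT, ha]
    · have : insert a T ≠ insert a S := fun h =>
        hT (by rw [← Finset.erase_insert haT, h, Finset.erase_insert ha])
      simp [haT, hT, this]

section Invariant

variable {p : Submodule ℂ (Fock n)}

lemma indicatorStable_setOf_mem_iff {j : Fin n} (hc : ∀ x ∈ p, creat j x ∈ p)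
    (ha : ∀ x ∈ p, annih j x ∈ p) (S : Finset (Fin n)) :
    IndicatorStable p {T | j ∈ T ↔ j ∈ S} := by
  intro ψ hψ
  by_cases hj : j ∈ S
  · convert hc _ (ha ψ hψ) using 1
    ext T
    simp [creat_annih_apply, hj]
  · convert ha _ (hc ψ hψ) using 1
    ext T
    simp [annih_creat_apply, hj]

lemma indicatorStable_singleton (hc : ∀ j, ∀ x ∈ p, creat j x ∈ p)
    (ha : ∀ j, ∀ x ∈ p, annih j x ∈ p) (S : Finset (Fin n)) : IndicatorStable p {S} := by
  have h : ({S} : Set (Finset (Fin n))) = ⋂ j ∈ Finset.univ, {T | j ∈ T ↔ j ∈ S} := by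
    ext T
    simp [Finset.ext_iff]
  rw [h]
  exact IndicatorStable.iInter_finset (fun j => indicatorStable_setOf_mem_iff (hc j) (ha j) S) _

lemma single_insert_mem_iff {a : Fin n} (hc : ∀ x ∈ p, creat a x ∈ p)
    (ha : ∀ x ∈ p, annih a x ∈ p) {S : Finset (Fin n)} (haS : a ∉ S) :
    EuclideanSpace.single (insert a S) 1 ∈ p ↔ EuclideanSpace.single S 1 ∈ p := by
  constructor
  · intro h
    exact (p.smul_mem_iff (csign_ne_zero a S)).mp (annih_single haS ▸ ha _ h)
  · intro h
    exact (p.smul_mem_iff (csign_ne_zero a S)).mp (creat_single haS ▸ hc _ h)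

lemma single_mem_iff_vacuum_mem (hc : ∀ j, ∀ x ∈ p, creat j x ∈ p)
    (ha : ∀ j, ∀ x ∈ p, annih j x ∈ p) (S : Finset (Fin n)) :
    EuclideanSpace.single S 1 ∈ p ↔ EuclideanSpace.single ∅ 1 ∈ p := by
  induction S using Finset.induction_on with
  | empty => rfl
  | insert a S haS ih => rw [single_insert_mem_iff (hc a) (ha a) haS, ih]

lemma eq_top_of_creat_annih_mem (hc : ∀ j, ∀ x ∈ p, creat j x ∈ p)
    (ha : ∀ j, ∀ x ∈ p, annih j x ∈ p) (hp : p ≠ ⊥) : p = ⊤ := by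
  obtain ⟨ψ, hψ, hψ0⟩ := p.ne_bot_iff.mp hp
  obtain ⟨S, hS⟩ : ∃ S, ψ S ≠ 0 := by
    by_contra! h
    exact hψ0 (by ext S; simp [h S])
  have hvac := (single_mem_iff_vacuum_mem hc ha S).mp
    ((indicatorStable_singleton hc ha S).single_mem hψ hS)
  rw [eq_top_iff, ← (EuclideanSpace.basisFun _ ℂ).toBasis.span_eq, Submodule.span_le]
  rintro _ ⟨T, rfl⟩
  simpa using (single_mem_iff_vacuum_mem hc ha T).mpr hvac

end Invariant

end FockOperators

theorem half_spin_irreducible_general (n : ℕ) (p : Submodule ℂ (Fock n))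
    (h1 : ∀ ℓ : Fin (2*n), ∀ x ∈ p, ((1/2 : ℂ) • gamB ℓ) x ∈ p) :
    p = ⊥ ∨ p = ⊤ := by
  refine or_iff_not_imp_left.mpr (eq_top_of_creat_annih_mem (fun j x hx => ?_) (fun j x hx => ?_))
  · rw [creat_eq_gamB]
    exact p.add_mem (h1 _ x hx) (p.smul_mem _ (h1 _ x hx))
  · rw [annih_eq_gamB]
    exact p.sub_mem (p.smul_mem _ (h1 _ x hx)) (h1 _ x hx)

/-- the 1/2-spin representation of `so(2n+1, ℂ)` on `Λℂⁿ`, determined by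
`π^{1/2}(X_{ℓ,2n+1}) = ½γ_ℓ` and `π^{1/2}(X_{jℓ}) = ½γ_jγ_ℓ`, is irreducible: any
invariant subspace is `{0}` or everything. -/
theorem half_spin_irreducible (n : ℕ) (p : Submodule ℂ (Fock n))
    (h1 : ∀ ℓ : Fin (2*n), ∀ x ∈ p, ((1/2 : ℂ) • gamB ℓ) x ∈ p)
    (h2 : ∀ j ℓ : Fin (2*n), j < ℓ → ∀ x ∈ p, ((1/2 : ℂ) • (gamB j * gamB ℓ)) x ∈ p) :
    p = ⊥ ∨ p = ⊤ :=
  half_spin_irreducible_general n p h1
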